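/- Let m > n, let z_n be an even eigenfunction at level n with eigenvalue Λ_n, let z_m be an even eigenfunction at level m with eigenvalue Λ_m, and set Δ = m − n. For an integer k define h_n^k = (−1)^k L^{2n−2k−2}(Λ_n)z_n for k ≥ 0 and h_n^k = 0 for k < 0, and similarly h_m^k = (−1)^k L^{2m−2k−2}(Λ_m)z_m for k ≥ 0 and h_m^k = 0 for k < 0. Then for every integer k with −1−⌊Δ/2⌋ ≤ k ≤ n−p−1: ⟨z_m · h_n^k⟩ − (−1)^Δ ⟨z_n · h_m^{k+Δ}⟩ = (Λ_m − Λ_n)·(−1)^k·⟨z_n^{(n−p−k−1)} z_m^{(n−p−k−1)}⟩. -/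

import Mathlib

noncomputable section

/-- `Omega k z`: `z` is infinitely differentiable on `ℝ` and
`z⁽ʲ⁾(−1) = z⁽ʲ⁾(1) = 0` for `j = 0, …, k−1`. -/
def Omega (k : ℕ) (z : ℝ → ℝ) : Prop :=
  ContDiff ℝ (⊤ : ℕ∞) z ∧ ∀ j < k, iteratedDeriv j z (-1) = 0 ∧ iteratedDeriv j z 1 = 0

/-- `⟨f g⟩ = ∫_{−1}^{1} f x * g x dx`. -/
def ip (f g : ℝ → ℝ) : ℝ := ∫ x in (-1:ℝ)..1, f x * g x

/-- `z` is not identically zero on `[−1,1]`. -/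
def NotIdZero (z : ℝ → ℝ) : Prop := ∃ x ∈ Set.Icc (-1:ℝ) 1, z x ≠ 0

/-- The operator `L^{2k}(Λ) z = (−1)^k z^{(2k)} − Λ (−1)^{k−p} z^{(2k−2p)}`. -/
def Lop (p k : ℕ) (Λ : ℝ) (z : ℝ → ℝ) : ℝ → ℝ := fun x =>
  (-1 : ℝ) ^ k * iteratedDeriv (2 * k) z x
    - Λ * (-1 : ℝ) ^ (k - p) * iteratedDeriv (2 * k - 2 * p) z x

/-- `z` is an even eigenfunction at level `k` with eigenvalue `Λ`. -/
def EvenEig (p k : ℕ) (Λ : ℝ) (z : ℝ → ℝ) : Prop :=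
  Omega k z ∧ NotIdZero z ∧ (∀ x, z (-x) = z x) ∧
    ∀ x ∈ Set.Icc (-1:ℝ) 1, Lop p k Λ z x = 0

/-- `h_n^k = (−1)^k L^{2n−2k−2}(Λ) z` for `k ≥ 0`, and `0` for `k < 0`. -/
def hfun (p n : ℕ) (Λ : ℝ) (z : ℝ → ℝ) (k : ℤ) : ℝ → ℝ :=
  if k < 0 then 0 else fun x => (-1 : ℝ) ^ k.toNat * Lop p (n - k.toNat - 1) Λ z x


lemma ip_comm (f g : ℝ → ℝ) : ip f g = ip g f := by
  unfold ip; simp_rw [mul_comm]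

lemma contD {f : ℝ → ℝ} (hf : ContDiff ℝ (⊤ : ℕ∞) f) (i : ℕ) : Continuous (iteratedDeriv i f) :=
  hf.continuous_iteratedDeriv i (by exact_mod_cast le_top)

lemma intD {f g : ℝ → ℝ} (hf : ContDiff ℝ (⊤ : ℕ∞) f) (hg : ContDiff ℝ (⊤ : ℕ∞) g) (i j : ℕ) :
    IntervalIntegrable (fun x => iteratedDeriv i f x * iteratedDeriv j g x)
      MeasureTheory.volume (-1:ℝ) 1 :=
  ((contD hf i).mul (contD hg j)).intervalIntegrable _ _

lemma neg_one_pow_congr_mod2 {a b : ℕ} (h : a % 2 = b % 2) : (-1:ℝ)^a = (-1)^b := by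
  conv_lhs => rw [← Nat.div_add_mod a 2]
  conv_rhs => rw [← Nat.div_add_mod b 2]
  rw [h, pow_add, pow_add, pow_mul, pow_mul]; norm_num

lemma shift1 {f g : ℝ → ℝ} (hf : ContDiff ℝ (⊤ : ℕ∞) f) (hg : ContDiff ℝ (⊤ : ℕ∞) g) (i j : ℕ)
    (hb1 : iteratedDeriv i f (-1) * iteratedDeriv j g (-1) = 0)
    (hb2 : iteratedDeriv i f 1 * iteratedDeriv j g 1 = 0) :
    ip (iteratedDeriv (i+1) f) (iteratedDeriv j g)
      = - ip (iteratedDeriv i f) (iteratedDeriv (j+1) g) := by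
  have key := intervalIntegral.integral_deriv_mul_eq_sub (a := (-1:ℝ)) (b := 1)
    (u := iteratedDeriv i f) (v := iteratedDeriv j g)
    (u' := iteratedDeriv (i+1) f) (v' := iteratedDeriv (j+1) g)
    (fun x _ => by
      rw [iteratedDeriv_succ]
      exact ((hf.differentiable_iteratedDeriv i (by exact_mod_cast WithTop.coe_lt_top _)) x).hasDerivAt)
    (fun x _ => by
      rw [iteratedDeriv_succ]
      exact ((hg.differentiable_iteratedDeriv j (by exact_mod_cast WithTop.coe_lt_top _)) x).hasDerivAt)
    (((contD hf (i+1))).intervalIntegrable _ _)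
    (((contD hg (j+1))).intervalIntegrable _ _)
  rw [hb1, hb2, sub_zero] at key
  have hadd := intervalIntegral.integral_add (intD hf hg (i+1) j) (intD hf hg i (j+1))
  unfold ip
  have : (∫ x in (-1:ℝ)..1, iteratedDeriv (i+1) f x * iteratedDeriv j g x)
      + ∫ x in (-1:ℝ)..1, iteratedDeriv i f x * iteratedDeriv (j+1) g x = 0 := by
    rw [← hadd]; exact key
  linarith

lemma shiftd {f g : ℝ → ℝ} {N M : ℕ} (hf : ContDiff ℝ (⊤ : ℕ∞) f) (hg : ContDiff ℝ (⊤ : ℕ∞) g)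
    (hfb : ∀ i < N, iteratedDeriv i f (-1) = 0 ∧ iteratedDeriv i f 1 = 0)
    (hgb : ∀ j < M, iteratedDeriv j g (-1) = 0 ∧ iteratedDeriv j g 1 = 0)
    (d : ℕ) : ∀ i j : ℕ, i + j ≤ N + M → d ≤ i →
    ip (iteratedDeriv i f) (iteratedDeriv j g)
      = (-1:ℝ)^d * ip (iteratedDeriv (i-d) f) (iteratedDeriv (j+d) g) := by
  induction d with
  | zero => intro i j _ _; simp
  | succ d ih =>
    intro i j hij hdi
    obtain ⟨i', rfl⟩ : ∃ i', i = i' + 1 := ⟨i - 1, by omega⟩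
    have hb : ∀ x : ℝ, (x = -1 ∨ x = 1) → iteratedDeriv i' f x * iteratedDeriv j g x = 0 := by
      intro x hx
      rcases lt_or_ge i' N with h | h
      · rcases hx with rfl | rfl
        · rw [(hfb i' h).1]; ring
        · rw [(hfb i' h).2]; ring
      · have hjM : j < M := by omega
        rcases hx with rfl | rfl
        · rw [(hgb j hjM).1]; ring
        · rw [(hgb j hjM).2]; ring
    rw [shift1 hf hg i' j (hb _ (Or.inl rfl)) (hb _ (Or.inr rfl)),
      ih i' (j+1) (by omega) (by omega)]
    rw [show i' - d = i' + 1 - (d+1) by omega, show j + 1 + d = j + (d+1) by omega]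
    ring

lemma shift_any {f g : ℝ → ℝ} {N M : ℕ} (hf : ContDiff ℝ (⊤ : ℕ∞) f) (hg : ContDiff ℝ (⊤ : ℕ∞) g)
    (hfb : ∀ i < N, iteratedDeriv i f (-1) = 0 ∧ iteratedDeriv i f 1 = 0)
    (hgb : ∀ j < M, iteratedDeriv j g (-1) = 0 ∧ iteratedDeriv j g 1 = 0)
    (i j i' j' : ℕ) (hsum : i + j = i' + j') (hle : i + j ≤ N + M) :
    ip (iteratedDeriv i f) (iteratedDeriv j g)
      = (-1:ℝ)^(i+i') * ip (iteratedDeriv i' f) (iteratedDeriv j' g) := by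
  rcases le_total i' i with h | h
  · have := shiftd hf hg hfb hgb (i - i') i j hle (by omega)
    rw [show i - (i - i') = i' by omega, show j + (i - i') = j' by omega] at this
    rw [this, show i + i' = (i - i') + 2*i' by omega, pow_add, pow_mul]
    ring_nf
  · have := shiftd hg hf hgb hfb (j - j') j i (by omega) (by omega)
    rw [show j - (j - j') = j' by omega, show i + (j - j') = i' by omega] at this
    rw [ip_comm, this, ip_comm (iteratedDeriv j' g),
      show i + i' = (j - j') + 2*i by omega, pow_add, pow_mul]
    ring_nf

lemma eigen_ptwise {p lev : ℕ} (hple : p ≤ lev) {Λ : ℝ} {z : ℝ → ℝ}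
    (heig : ∀ x ∈ Set.Icc (-1:ℝ) 1, Lop p lev Λ z x = 0) :
    ∀ x ∈ Set.Icc (-1:ℝ) 1,
      iteratedDeriv (2*lev) z x = Λ * ((-1:ℝ)^p * iteratedDeriv (2*lev-2*p) z x) := by
  intro x hx
  have h := heig x hx
  simp only [Lop, sub_eq_zero] at h
  have h2 := congrArg (fun y => (-1:ℝ)^lev * y) h
  rw [← mul_assoc, ← pow_add, Even.neg_one_pow ⟨lev, by ring⟩, one_mul] at h2
  rw [h2, show (-1:ℝ)^lev * (Λ * (-1:ℝ)^(lev-p) * iteratedDeriv (2*lev-2*p) z x)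
      = Λ * (((-1:ℝ)^lev * (-1:ℝ)^(lev-p)) * iteratedDeriv (2*lev-2*p) z x) by ring,
    ← pow_add, neg_one_pow_congr_mod2 (a := lev + (lev-p)) (b := p) (by omega)]

lemma ip_eigen {p lev : ℕ} (hple : p ≤ lev) {Λ : ℝ} {z : ℝ → ℝ}
    (heig : ∀ x ∈ Set.Icc (-1:ℝ) 1, Lop p lev Λ z x = 0) (g : ℝ → ℝ) :
    ip (iteratedDeriv (2*lev) z) g
      = Λ * ((-1:ℝ)^p * ip (iteratedDeriv (2*lev - 2*p) z) g) := by
  unfold ip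
  rw [← intervalIntegral.integral_const_mul, ← intervalIntegral.integral_const_mul]
  apply intervalIntegral.integral_congr
  intro x hx
  rw [Set.uIcc_of_le (by norm_num : (-1:ℝ) ≤ 1)] at hx
  simp only
  rw [eigen_ptwise hple heig x hx]; ring

lemma ip_hfun_eval (p lev : ℕ) (Λ c : ℝ) (f g : ℝ → ℝ)
    (hf : ContDiff ℝ (⊤ : ℕ∞) f) (hg : ContDiff ℝ (⊤ : ℕ∞) g) :
    ip f (fun x => c * Lop p lev Λ g x)
      = c * (-1:ℝ)^lev * ip f (iteratedDeriv (2*lev) g)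
        - c * Λ * (-1:ℝ)^(lev-p) * ip f (iteratedDeriv (2*lev-2*p) g) := by
  have h1 : IntervalIntegrable
      (fun x => (c*(-1:ℝ)^lev) * (f x * iteratedDeriv (2*lev) g x))
      MeasureTheory.volume (-1:ℝ) 1 :=
    (continuous_const.mul (hf.continuous.mul (contD hg _))).intervalIntegrable _ _
  have h2 : IntervalIntegrable
      (fun x => (c*Λ*(-1:ℝ)^(lev-p)) * (f x * iteratedDeriv (2*lev-2*p) g x))
      MeasureTheory.volume (-1:ℝ) 1 :=
    (continuous_const.mul (hf.continuous.mul (contD hg _))).intervalIntegrable _ _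
  unfold ip
  rw [intervalIntegral.integral_congr
      (g := fun x => (c*(-1:ℝ)^lev) * (f x * iteratedDeriv (2*lev) g x)
          - (c*Λ*(-1:ℝ)^(lev-p)) * (f x * iteratedDeriv (2*lev-2*p) g x))
      (fun x _ => by simp only [Lop]; ring),
    intervalIntegral.integral_sub h1 h2, intervalIntegral.integral_const_mul,
    intervalIntegral.integral_const_mul]

theorem stmt12 (p : ℕ) (hp : 1 ≤ p) (n : ℕ) (hn : p < n) (m : ℕ) (hm : n < m)
    (Λn Λm : ℝ) (zn zm : ℝ → ℝ)
    (hzn : EvenEig p n Λn zn) (hzm : EvenEig p m Λm zm)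
    (k : ℤ) (hk1 : -1 - ((m : ℤ) - n) / 2 ≤ k) (hk2 : k ≤ (n : ℤ) - p - 1) :
    ip zm (hfun p n Λn zn k)
        - (-1 : ℝ) ^ (m - n) * ip zn (hfun p m Λm zm (k + ((m : ℤ) - n)))
      = (Λm - Λn) * (-1 : ℝ) ^ k *
          ip (iteratedDeriv ((n : ℤ) - p - k - 1).toNat zn)
             (iteratedDeriv ((n : ℤ) - p - k - 1).toNat zm) := by
  obtain ⟨⟨hznC, hznB⟩, -, -, hznE⟩ := hzn
  obtain ⟨⟨hzmC, hzmB⟩, -, -, hzmE⟩ := hzm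
  rcases le_or_gt 0 k with hknn | hkneg
  · -- case k ≥ 0
    obtain ⟨K, rfl⟩ : ∃ K : ℕ, k = (K:ℤ) := ⟨k.toNat, by omega⟩
    have hKn : K + p + 1 ≤ n := by omega
    -- shift identities
    have c1 : ip zm (iteratedDeriv (2*(n-K-1)) zn)
        = (-1:ℝ)^(2*(n-K-1) + (n-K-1))
            * ip (iteratedDeriv (n-K-1) zn) (iteratedDeriv (n-K-1) zm) := by
      have h := shift_any hznC hzmC hznB hzmB (2*(n-K-1)) 0 (n-K-1) (n-K-1)
        (by omega) (by omega)
      rw [iteratedDeriv_zero] at h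
      rw [ip_comm]; exact h
    have c2 : ip zm (iteratedDeriv (2*(n-p-K-1)) zn)
        = (-1:ℝ)^(2*(n-p-K-1) + (n-p-K-1))
            * ip (iteratedDeriv (n-p-K-1) zn) (iteratedDeriv (n-p-K-1) zm) := by
      have h := shift_any hznC hzmC hznB hzmB (2*(n-p-K-1)) 0 (n-p-K-1) (n-p-K-1)
        (by omega) (by omega)
      rw [iteratedDeriv_zero] at h
      rw [ip_comm]; exact h
    have c3 : ip zn (iteratedDeriv (2*(n-K-1)) zm)
        = (-1:ℝ)^(0 + (n-K-1))
            * ip (iteratedDeriv (n-K-1) zn) (iteratedDeriv (n-K-1) zm) := by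
      have h := shift_any hznC hzmC hznB hzmB 0 (2*(n-K-1)) (n-K-1) (n-K-1)
        (by omega) (by omega)
      rw [iteratedDeriv_zero] at h; exact h
    have c4 : ip zn (iteratedDeriv (2*(n-p-K-1)) zm)
        = (-1:ℝ)^(0 + (n-p-K-1))
            * ip (iteratedDeriv (n-p-K-1) zn) (iteratedDeriv (n-p-K-1) zm) := by
      have h := shift_any hznC hzmC hznB hzmB 0 (2*(n-p-K-1)) (n-p-K-1) (n-p-K-1)
        (by omega) (by omega)
      rw [iteratedDeriv_zero] at h; exact h
    have hEn : ip zm (hfun p n Λn zn (K:ℤ))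
        = (-1:ℝ)^K * (-1:ℝ)^(n-K-1) * ip zm (iteratedDeriv (2*(n-K-1)) zn)
          - (-1:ℝ)^K * Λn * (-1:ℝ)^((n-K-1)-p)
              * ip zm (iteratedDeriv (2*(n-K-1)-2*p) zn) := by
      unfold hfun
      rw [if_neg (by omega : ¬ ((K:ℤ) < 0))]
      simp only [Int.toNat_natCast]
      exact ip_hfun_eval p (n-K-1) Λn _ zm zn hzmC hznC
    have hEm : ip zn (hfun p m Λm zm ((K:ℤ) + ((m:ℤ) - n)))
        = (-1:ℝ)^(K+(m-n)) * (-1:ℝ)^(m-(K+(m-n))-1)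
            * ip zn (iteratedDeriv (2*(m-(K+(m-n))-1)) zm)
          - (-1:ℝ)^(K+(m-n)) * Λm * (-1:ℝ)^((m-(K+(m-n))-1)-p)
              * ip zn (iteratedDeriv (2*(m-(K+(m-n))-1)-2*p) zm) := by
      unfold hfun
      rw [if_neg (by omega : ¬ ((K:ℤ) + ((m:ℤ) - n) < 0)),
        show ((K:ℤ) + ((m:ℤ) - n)).toNat = K + (m-n) by omega]
      exact ip_hfun_eval p (m-(K+(m-n))-1) Λm _ zn zm hznC hzmC
    rw [show m-(K+(m-n))-1 = n-K-1 by omega] at hEm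
    rw [show (n-K-1)-p = n-p-K-1 by omega] at hEn hEm
    rw [show 2*(n-K-1)-2*p = 2*(n-p-K-1) by omega] at hEn hEm
    set A := ip (iteratedDeriv (n-K-1) zn) (iteratedDeriv (n-K-1) zm) with hA
    set B := ip (iteratedDeriv (n-p-K-1) zn) (iteratedDeriv (n-p-K-1) zm) with hB
    have s1 : (-1:ℝ)^(n-K-1) * (-1:ℝ)^(2*(n-K-1) + (n-K-1)) = 1 := by
      rw [← pow_add]; exact Even.neg_one_pow ⟨2*(n-K-1), by omega⟩
    have s2 : (-1:ℝ)^(n-p-K-1) * (-1:ℝ)^(2*(n-p-K-1) + (n-p-K-1)) = 1 := by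
      rw [← pow_add]; exact Even.neg_one_pow ⟨2*(n-p-K-1), by omega⟩
    have s3 : (-1:ℝ)^(n-K-1) * (-1:ℝ)^(0 + (n-K-1)) = 1 := by
      rw [← pow_add]; exact Even.neg_one_pow ⟨n-K-1, by omega⟩
    have s4 : (-1:ℝ)^(n-p-K-1) * (-1:ℝ)^(0 + (n-p-K-1)) = 1 := by
      rw [← pow_add]; exact Even.neg_one_pow ⟨n-p-K-1, by omega⟩
    have s5 : (-1:ℝ)^(m-n) * (-1:ℝ)^(K+(m-n)) = (-1:ℝ)^K := by
      rw [← pow_add]; exact neg_one_pow_congr_mod2 (by omega)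
    have hEn' : ip zm (hfun p n Λn zn (K:ℤ)) = (-1:ℝ)^K * (A - Λn * B) := by
      rw [hEn, c1, c2]
      linear_combination ((-1:ℝ)^K * A) * s1 - ((-1:ℝ)^K * Λn * B) * s2
    have hEm' : ip zn (hfun p m Λm zm ((K:ℤ) + ((m:ℤ) - n)))
        = (-1:ℝ)^(K+(m-n)) * (A - Λm * B) := by
      rw [hEm, c3, c4]
      linear_combination ((-1:ℝ)^(K+(m-n)) * A) * s3
        - ((-1:ℝ)^(K+(m-n)) * Λm * B) * s4
    rw [hEn', hEm', show ((n:ℤ) - p - (K:ℤ) - 1).toNat = n-p-K-1 by omega, ← hB,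
      zpow_natCast]
    linear_combination (Λm * B - A) * s5
  · -- case k < 0
    obtain ⟨r, rfl⟩ : ∃ r : ℕ, k = -(r:ℤ) - 1 := ⟨(-k-1).toNat, by omega⟩
    have h2r : 2*r ≤ m - n := by omega
    have hr1 : r + 1 ≤ m - n := by omega
    have hzero : ip zm (hfun p n Λn zn (-(r:ℤ) - 1)) = 0 := by
      unfold hfun
      rw [if_pos (by omega : (-(r:ℤ) - 1) < 0)]
      unfold ip
      simp
    have c3 : ip zn (iteratedDeriv (2*(n+r)) zm)
        = (-1:ℝ)^(0 + 2*n) * ip (iteratedDeriv (2*n) zn) (iteratedDeriv (2*r) zm) := by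
      have h := shift_any hznC hzmC hznB hzmB 0 (2*(n+r)) (2*n) (2*r)
        (by omega) (by omega)
      rw [iteratedDeriv_zero] at h; exact h
    have heq : ip (iteratedDeriv (2*n) zn) (iteratedDeriv (2*r) zm)
        = Λn * ((-1:ℝ)^p * ip (iteratedDeriv (2*n - 2*p) zn) (iteratedDeriv (2*r) zm)) :=
      ip_eigen hn.le hznE _
    have c5 : ip (iteratedDeriv (2*n-2*p) zn) (iteratedDeriv (2*r) zm)
        = (-1:ℝ)^((2*n-2*p) + (n-p+r))
            * ip (iteratedDeriv (n-p+r) zn) (iteratedDeriv (n-p+r) zm) :=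
      shift_any hznC hzmC hznB hzmB (2*n-2*p) (2*r) (n-p+r) (n-p+r) (by omega) (by omega)
    have c4 : ip zn (iteratedDeriv (2*(n-p+r)) zm)
        = (-1:ℝ)^(0 + (n-p+r))
            * ip (iteratedDeriv (n-p+r) zn) (iteratedDeriv (n-p+r) zm) := by
      have h := shift_any hznC hzmC hznB hzmB 0 (2*(n-p+r)) (n-p+r) (n-p+r)
        (by omega) (by omega)
      rw [iteratedDeriv_zero] at h; exact h
    have hEm : ip zn (hfun p m Λm zm ((-(r:ℤ) - 1) + ((m:ℤ) - n)))
        = (-1:ℝ)^(m-n-r-1) * (-1:ℝ)^(m-(m-n-r-1)-1)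
            * ip zn (iteratedDeriv (2*(m-(m-n-r-1)-1)) zm)
          - (-1:ℝ)^(m-n-r-1) * Λm * (-1:ℝ)^((m-(m-n-r-1)-1)-p)
              * ip zn (iteratedDeriv (2*(m-(m-n-r-1)-1)-2*p) zm) := by
      unfold hfun
      rw [if_neg (by omega : ¬ ((-(r:ℤ) - 1) + ((m:ℤ) - n) < 0)),
        show ((-(r:ℤ) - 1) + ((m:ℤ) - n)).toNat = m-n-r-1 by omega]
      exact ip_hfun_eval p (m-(m-n-r-1)-1) Λm _ zn zm hznC hzmC
    rw [show m-(m-n-r-1)-1 = n+r by omega] at hEm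
    rw [show (n+r)-p = n-p+r by omega] at hEm
    rw [show 2*(n+r)-2*p = 2*(n-p+r) by omega] at hEm
    set B := ip (iteratedDeriv (n-p+r) zn) (iteratedDeriv (n-p+r) zm) with hB
    have e1 : (-1:ℝ)^(n+r) * (-1:ℝ)^(0 + 2*n) * (-1:ℝ)^p
        * (-1:ℝ)^((2*n-2*p) + (n-p+r)) = 1 := by
      rw [← pow_add, ← pow_add, ← pow_add]
      exact Even.neg_one_pow ⟨3*n - p + r, by omega⟩
    have e2 : (-1:ℝ)^(n-p+r) * (-1:ℝ)^(0 + (n-p+r)) = 1 := by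
      rw [← pow_add]; exact Even.neg_one_pow ⟨n-p+r, by omega⟩
    have hEm' : ip zn (hfun p m Λm zm ((-(r:ℤ) - 1) + ((m:ℤ) - n)))
        = (-1:ℝ)^(m-n-r-1) * (Λn - Λm) * B := by
      rw [hEm, c3, heq, c5, c4]
      linear_combination ((-1:ℝ)^(m-n-r-1) * Λn * B) * e1
        - ((-1:ℝ)^(m-n-r-1) * Λm * B) * e2
    have hzp : (-1:ℝ)^(-(r:ℤ) - 1) = (-1:ℝ)^(r+1) := by
      rw [show -(r:ℤ) - 1 = -((r+1 : ℕ):ℤ) by push_cast; ring, zpow_neg, zpow_natCast]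
      rcases Nat.even_or_odd (r+1) with h | h
      · rw [h.neg_one_pow]; norm_num
      · rw [h.neg_one_pow]; norm_num
    have s5 : (-1:ℝ)^(m-n) * (-1:ℝ)^(m-n-r-1) = (-1:ℝ)^(r+1) := by
      rw [← pow_add]; exact neg_one_pow_congr_mod2 (by omega)
    rw [hzero, hEm', hzp,
      show ((n:ℤ) - p - (-(r:ℤ) - 1) - 1).toNat = n-p+r by omega, ← hB]
    linear_combination ((Λm - Λn) * B) * s5
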